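/- Let {X_k, k ≥ 1} be i.i.d. real-valued random variables with distribution F and 0 < μ_+ = E[X^+] < ∞. For v > 0 and x > 0 set X̃_k = X_k·1{X_k ≤ vx} and S̃_n = X̃_1 + ⋯ + X̃_n. Then for all n ≥ 1 and x > 0, P(S̃_n > x) ≤ c_2 (n/x)^{1/v}, where c_2 = (μ_+ e)^{1/v}. -/

import Mathlib

open Filter MeasureTheory Set ProbabilityTheory

noncomputable section

/-- `f` is eventually positive. -/
def EvPos (f : ℝ → ℝ) : Prop := ∀ᶠ x in atTop, 0 < f x

/-- `f` is intermediate regularly varying. -/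
def IRvar (f : ℝ → ℝ) : Prop :=
  Tendsto (fun y => liminf (fun x => f (x * y) / f x) atTop) (nhdsWithin 1 (Ioi 1)) (nhds 1) ∧
  Tendsto (fun y => limsup (fun x => f (x * y) / f x) atTop) (nhdsWithin 1 (Ioi 1)) (nhds 1)

/-- `f` is O-regularly varying. -/
def ORvar (f : ℝ → ℝ) : Prop :=
  ∀ y : ℝ, 1 ≤ y →
    0 < liminf (fun x => f (x * y) / f x) atTop ∧
    IsBoundedUnder (· ≤ ·) atTop (fun x => f (x * y) / f x)

/-- `f` is long tailed. -/
def LongTailed (f : ℝ → ℝ) : Prop :=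
  ∀ y : ℝ, Tendsto (fun x => f (x + y) / f x) atTop (nhds 1)

/-- `f` is almost decreasing. -/
def AlmostDecreasing (f : ℝ → ℝ) : Prop :=
  IsBoundedUnder (· ≤ ·) atTop (fun x => sSup (f '' Ici x) / f x)

/-- the index `l_f` (as ε ↓ 0 the inner liminf increases, so the limit is the sup over ε > 0). -/
def lIdx (f : ℝ → ℝ) : ℝ :=
  ⨆ ε : Ioi (0:ℝ),
    liminf (fun x => sInf (f '' Icc ((1 - (ε:ℝ)) * x) ((1 + (ε:ℝ)) * x)) / f x) atTop

/-- the index `L_f` (as ε ↓ 0 the inner limsup decreases, so the limit is the inf over ε > 0). -/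
def LIdx (f : ℝ → ℝ) : ℝ :=
  ⨅ ε : Ioi (0:ℝ),
    limsup (fun x => sSup (f '' Icc ((1 - (ε:ℝ)) * x) ((1 + (ε:ℝ)) * x)) / f x) atTop

/-- `a` is the upper Matuszewska index `α(f)`. -/
def HasUpperMat (f : ℝ → ℝ) (a : ℝ) : Prop :=
  Tendsto (fun y => Real.log (limsup (fun x => f (x * y) / f x) atTop) / Real.log y)
    atTop (nhds a)

/-- `b` is the lower Matuszewska index `β(f)`. -/
def HasLowerMat (f : ℝ → ℝ) (b : ℝ) : Prop :=
  Tendsto (fun y => Real.log (liminf (fun x => f (x * y) / f x) atTop) / Real.log y)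
    atTop (nhds b)

/-- `Δ` is a set of the form `(0,T]` with `0 < T ≤ ∞`. -/
def IsDelta (Δ : Set ℝ) : Prop := (∃ T : ℝ, 0 < T ∧ Δ = Ioc 0 T) ∨ Δ = Ioi 0

/-! Truncating at `v * x` makes every summand at most `v * x`, so by convexity of `exp` on
`[0, v * x]` the moment generating function of a truncated summand is at most
`1 + μ₊ (exp (h v x) - 1) / (v x)`. The exponential Chebyshev (Chernoff) inequality and independence
then bound the tail of the truncated sum by `exp (-h x) (1 + μ₊ (exp (h v x) - 1) / (v x)) ^ n`, and
the choice `h = log (x / (n μ₊) + 1) / (v x)` turns this into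
`exp (1 / v) (x / (n μ₊) + 1) ^ (-1 / v) ≤ (μ₊ e n / x) ^ (1 / v)`. -/

open Real

lemma exp_mul_le_one_add_max_mul {t c z : ℝ} (ht : 0 ≤ t) (hc : 0 < c) (hz : z ≤ c) :
    exp (t * z) ≤ 1 + max z 0 * ((exp (t * c) - 1) / c) := by
  rcases le_or_gt z 0 with hz0 | hz0
  · rw [max_eq_right hz0, zero_mul, add_zero]
    exact exp_le_one_iff.2 (mul_nonpos_of_nonneg_of_nonpos ht hz0)
  · rw [max_eq_left hz0.le]
    -- `t * z` is the convex combination of `t * c` and `0` with weights `z / c` and `1 - z / c`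
    have hconv := convexOn_exp.2 (mem_univ (t * c)) (mem_univ 0)
      (div_nonneg hz0.le hc.le) (sub_nonneg.2 ((div_le_one hc).2 hz)) (add_sub_cancel _ _)
    simp only [smul_eq_mul, mul_zero, add_zero, exp_zero, mul_one] at hconv
    calc exp (t * z) = exp (z / c * (t * c)) := by field_simp
      _ ≤ z / c * exp (t * c) + (1 - z / c) := hconv
      _ = 1 + z * ((exp (t * c) - 1) / c) := by field_simp; ring

lemma mul_indicator_setOf_le_le {c : ℝ} (hc : 0 ≤ c) (y : ℝ) :
    y * {y : ℝ | y ≤ c}.indicator (fun _ => 1) y ≤ c := by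
  by_cases hy : y ≤ c <;> simp [hy, hc]

lemma max_mul_indicator_setOf_le_le_max (c y : ℝ) :
    max (y * {y : ℝ | y ≤ c}.indicator (fun _ => 1) y) 0 ≤ max y 0 := by
  by_cases hy : y ≤ c <;> simp [hy]

lemma one_add_div_pow_le_exp {a : ℝ} {n : ℕ} (ha : -n ≤ a) : (1 + a / n) ^ n ≤ exp a := by
  simpa [sub_eq_add_neg, neg_div] using one_sub_div_pow_le_exp_neg (t := -a) (neg_le.1 ha)

lemma exp_neg_log_add_one_div_mul_exp_le {a v : ℝ} (ha : 0 < a) (hv : 0 < v) :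
    exp (-(log (a + 1) / v)) * exp (1 / v) ≤ (exp 1 / a) ^ (1 / v) := by
  calc exp (-(log (a + 1) / v)) * exp (1 / v) = (a + 1) ^ (-(1 / v)) * exp 1 ^ (1 / v) := by
        rw [rpow_def_of_pos (by positivity), exp_one_rpow]; ring_nf
    _ ≤ a ^ (-(1 / v)) * exp 1 ^ (1 / v) := by
        gcongr ?_ * _
        exact rpow_le_rpow_of_nonpos ha (by linarith) (by simp [hv.le])
    _ = (exp 1 / a) ^ (1 / v) := by
        rw [div_rpow (exp_pos 1).le ha.le, rpow_neg ha.le]; ring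

section Moments

variable {Ω : Type*} [MeasurableSpace Ω] {P : Measure Ω}

lemma mgf_le_one_add_integral_mul [IsProbabilityMeasure P] {Y Z : Ω → ℝ} {t c : ℝ}
    (hY : AEMeasurable Y P) (ht : 0 ≤ t) (hc : 0 < c) (hYc : ∀ᵐ ω ∂P, Y ω ≤ c)
    (hYZ : ∀ᵐ ω ∂P, max (Y ω) 0 ≤ Z ω) (hZ : Integrable Z P) :
    mgf Y P t ≤ 1 + (∫ ω, Z ω ∂P) * ((exp (t * c) - 1) / c) := by
  have hC : 0 ≤ (exp (t * c) - 1) / c :=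
    div_nonneg (sub_nonneg.2 (one_le_exp (mul_nonneg ht hc.le))) hc.le
  calc mgf Y P t ≤ ∫ ω, (1 + Z ω * ((exp (t * c) - 1) / c)) ∂P := by
        refine integral_mono_ae (integrable_exp_mul_of_le t c ht hY hYc)
          ((integrable_const 1).add (hZ.mul_const _)) ?_
        filter_upwards [hYc, hYZ] with ω hω hωZ
        exact (exp_mul_le_one_add_max_mul ht hc hω).trans (by gcongr)
    _ = 1 + (∫ ω, Z ω ∂P) * ((exp (t * c) - 1) / c) := by
        rw [integral_add (integrable_const 1) (hZ.mul_const _), integral_const, integral_mul_const]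
        simp

lemma measure_sum_range_ge_le_exp_mul_mgf_pow {X : ℕ → Ω → ℝ} (hmeas : ∀ k, Measurable (X k))
    (hindep : iIndepFun X P) (hident : ∀ k, IdentDistrib (X k) (X 0) P P) {t : ℝ} (ht : 0 ≤ t)
    (hint : Integrable (fun ω => exp (t * X 0 ω)) P) (x : ℝ) (n : ℕ) :
    P.real {ω | x ≤ ∑ k ∈ Finset.range n, X k ω} ≤ exp (-t * x) * mgf (X 0) P t ^ n := by
  have := hindep.isProbabilityMeasure
  have hint_k : ∀ k, Integrable (fun ω => exp (t * X k ω)) P := fun k =>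
    ((hident k).comp (measurable_const_mul t).exp).integrable_iff.2 hint
  have hmgf : mgf (∑ k ∈ Finset.range n, X k) P t = mgf (X 0) P t ^ n := by
    rw [hindep.mgf_sum hmeas, Finset.prod_eq_pow_card fun k _ =>
      mgf_congr_of_identDistrib _ _ (hident k) t, Finset.card_range]
  simpa only [Finset.sum_apply, hmgf] using
    measure_ge_le_exp_mul_mgf (X := ∑ k ∈ Finset.range n, X k) x ht
      (hindep.integrable_exp_mul_sum hmeas fun k _ => hint_k k)

end Moments

theorem truncated_sum_exponential_bound
    {Ω : Type*} [MeasurableSpace Ω] (P : Measure Ω) [IsProbabilityMeasure P]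
    (X : ℕ → Ω → ℝ) (hmeas : ∀ k, Measurable (X k))
    (hindep : iIndepFun X P)
    (hident : ∀ k, IdentDistrib (X k) (X 0) P P)
    (hint : Integrable (fun ω => max (X 0 ω) 0) P)
    (μp : ℝ) (hμp : μp = ∫ ω, max (X 0 ω) 0 ∂P) (hμppos : 0 < μp)
    (v : ℝ) (hv : 0 < v) :
    ∀ n : ℕ, 1 ≤ n → ∀ x : ℝ, 0 < x →
      (P {ω | x < ∑ k ∈ Finset.range n, (X k ω) * (Set.indicator {y : ℝ | y ≤ v * x} (fun _ => 1) (X k ω))}).toReal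
        ≤ (μp * Real.exp 1) ^ (1 / v) * ((n : ℝ) / x) ^ (1 / v) := by
  intro n hn x hx
  have hn' : (0 : ℝ) < n := by exact_mod_cast hn
  have hc : 0 < v * x := by positivity
  set f : ℝ → ℝ := fun y => y * {y : ℝ | y ≤ v * x}.indicator (fun _ => 1) y
  have hf : Measurable f := measurable_id.mul (measurable_const.indicator measurableSet_Iic)
  -- `h` is chosen so that `exp (h * v * x) - 1 = x / (n * μp)`
  set a := x / (n * μp) with ha_def
  set h := log (a + 1) / (v * x) with hh_def
  have ha : 0 < a := by positivity
  have hh : 0 ≤ h := div_nonneg (log_nonneg (by linarith)) hc.le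
  have hmgf : mgf (f ∘ X 0) P h ≤ 1 + (1 / v) / n := by
    calc mgf (f ∘ X 0) P h ≤ 1 + μp * ((exp (h * (v * x)) - 1) / (v * x)) := hμp ▸
          mgf_le_one_add_integral_mul (hf.comp (hmeas 0)).aemeasurable hh hc
            (ae_of_all _ fun _ => mul_indicator_setOf_le_le hc.le _)
            (ae_of_all _ fun _ => max_mul_indicator_setOf_le_le_max _ _) hint
      _ = 1 + (1 / v) / n := by
          rw [div_mul_cancel₀ _ hc.ne', exp_log (by positivity), add_sub_cancel_right, ha_def]
          field_simp
  calc (P {ω | x < ∑ k ∈ Finset.range n, f (X k ω)}).toReal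
      ≤ P.real {ω | x ≤ ∑ k ∈ Finset.range n, (f ∘ X k) ω} :=
        measureReal_mono fun ω (hω : x < _) => hω.le
    _ ≤ exp (-h * x) * mgf (f ∘ X 0) P h ^ n :=
        measure_sum_range_ge_le_exp_mul_mgf_pow (fun k => hf.comp (hmeas k))
          (hindep.comp (fun _ => f) fun _ => hf) (fun k => (hident k).comp hf) hh
          (integrable_exp_mul_of_le h (v * x) hh (hf.comp (hmeas 0)).aemeasurable
            (ae_of_all _ fun _ => mul_indicator_setOf_le_le hc.le _)) x n
    _ = exp (-(log (a + 1) / v)) * mgf (f ∘ X 0) P h ^ n := by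
        rw [hh_def]; field_simp
    _ ≤ exp (-(log (a + 1) / v)) * exp (1 / v) := by
        gcongr
        exact (pow_le_pow_left₀ mgf_nonneg hmgf n).trans
            (one_add_div_pow_le_exp (by linarith [show 0 < 1 / v by positivity]))
    _ ≤ (exp 1 / a) ^ (1 / v) := exp_neg_log_add_one_div_mul_exp_le ha hv
    _ = (μp * exp 1) ^ (1 / v) * ((n : ℝ) / x) ^ (1 / v) := by
        rw [← mul_rpow (by positivity) (by positivity), ha_def]
        field_simp
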